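/- Let A be a real n×n matrix indexed by a quasi-uniform set D_n ⊂ ℝ^d, with N = ⌊n^{1/d}⌋, and suppose |A_{s,t}| ≤ C (1 + N‖t−s‖₂)^{−(d+ζ)} for all s,t ∈ D_n, where C > 0 is bounded and ζ ≥ 0. Then there is a bounded constant C'' (depending only on C, d, ζ and the quasi-uniformity constants) such that the entries of B = A² satisfy |B_{s,t}| ≤ C'' (1 + N‖t−s‖₂)^{−(d+ζ)} · (1 + [ζ = 0]·log(1 + N‖t−s‖₂)) for all s,t ∈ D_n. (Lemma C.1: the class of matrices with polynomially decaying off-diagonals is almost closed under squaring.) -/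

import Mathlib

open MeasureTheory ProbabilityTheory Filter Matrix BoundedContinuousFunction
open scoped BigOperators ENNReal NNReal Topology Classical

noncomputable section

/-- Points of `ℝ^d` with the Euclidean structure. -/
abbrev Pt (d : ℕ) := EuclideanSpace ℝ (Fin d)

/-- `N = ⌊n^(1/d)⌋`. -/
def Nof (d n : ℕ) : ℕ := Nat.floor ((n : ℝ) ^ ((1 : ℝ) / (d : ℝ)))

/-- Quasi-uniformity of the `n`-point sampling set `D ⊂ ℝ^d`: for every `s ∈ D` there is an
enumeration of `D \ {s}` which is monotone in the distance to `s` (so that its `i`-th element is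
the `i`-th nearest neighbour of `s`), whose distances obey the two-sided bound
`Cmin (i/n)^{1/d} ≤ r_{s,i} ≤ Cmax (i/n)^{1/d}`. -/
def QuasiUniform (d n : ℕ) (Cmin Cmax : ℝ) (D : Finset (Pt d)) : Prop :=
  D.card = n ∧
  ∀ s ∈ D, ∃ g : Fin (n - 1) → Pt d,
    (∀ i, g i ∈ D.erase s) ∧ Function.Injective g ∧
    (∀ t ∈ D.erase s, ∃ i, g i = t) ∧
    (∀ i j : Fin (n - 1), i ≤ j → dist s (g i) ≤ dist s (g j)) ∧
    (∀ i : Fin (n - 1),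
      Cmin * (((i : ℕ) + 1 : ℝ) / (n : ℝ)) ^ ((1 : ℝ) / (d : ℝ)) ≤ dist s (g i) ∧
      dist s (g i) ≤ Cmax * (((i : ℕ) + 1 : ℝ) / (n : ℝ)) ^ ((1 : ℝ) / (d : ℝ)))

/-- Preconditioning neighbourhoods `nb` and coefficients `a` of order `m` for the set `D`:
each `N_m(s) = nb s` lies in `D` within distance `c₀/N` of `s`; the coefficients annihilate all
monomials `(t-s)^r` with `|r|₁ < m`, do not annihilate some monomial with `|r|₁ ≥ m`, and are
normalized in Euclidean norm. -/
def PrecondCoeffs (d m : ℕ) (c₀ : ℝ) (N : ℕ) (D : Finset (Pt d))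
    (nb : Pt d → Finset (Pt d)) (a : Pt d → Pt d → ℝ) : Prop :=
  ∀ s ∈ D,
    nb s ⊆ D ∧
    (∀ t ∈ nb s, ‖t - s‖ ≤ c₀ / (N : ℝ)) ∧
    (∀ r : Fin d → ℕ, (∑ j, r j) < m →
      (∑ t ∈ nb s, a s t * ∏ j, (t j - s j) ^ r j) = 0) ∧
    (∃ r : Fin d → ℕ, m ≤ (∑ j, r j) ∧
      (∑ t ∈ nb s, a s t * ∏ j, (t j - s j) ^ r j) ≠ 0) ∧
    (∑ t ∈ nb s, (a s t) ^ 2) = 1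

/-- The Fourier filter `f^N_s(ω)` of the preconditioning coefficients. -/
def fN (d : ℕ) (ν : ℝ) (N : ℕ) (nb : Pt d → Finset (Pt d))
    (a : Pt d → Pt d → ℝ) (s ω : Pt d) : ℂ :=
  ((‖ω‖ ^ (-(ν + (d : ℝ) / 2)) : ℝ) : ℂ) *
    ∑ t ∈ nb s, ((a s t : ℝ) : ℂ) *
      Complex.exp (Complex.I * ((inner ℝ ((N : ℝ) • ω) (t - s) : ℝ) : ℂ))

/-- `h_N(x) = (1 + (Nx)^{-2})^{-(ν + d/2)}`. -/
def hN (d : ℕ) (ν : ℝ) (N : ℕ) (x : ℝ) : ℝ :=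
  (1 + ((N : ℝ) * x) ^ (-(2 : ℝ))) ^ (-(ν + (d : ℝ) / 2))

/-- The matrix `K_{n,m}(ρ)`, the `φ₀`-normalized covariance matrix of the preconditioned data,
given through its spectral representation. -/
def Kmat {d : ℕ} (ν : ℝ) (N : ℕ) (D : Finset (Pt d))
    (nb : Pt d → Finset (Pt d)) (a : Pt d → Pt d → ℝ) (ρ : ℝ) :
    Matrix D D ℝ :=
  Matrix.of fun s t =>
    ρ ^ (-(2 * ν)) *
      (∫ (ω : Pt d),
        Complex.exp (Complex.I * ((inner ℝ ((t : Pt d) - (s : Pt d)) ω : ℝ) : ℂ)) *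
          fN d ν N nb a (s : Pt d) ω * (starRingEnd ℂ) (fN d ν N nb a (t : Pt d) ω) *
          ((hN d ν N (ρ * ‖ω‖) : ℝ) : ℂ)).re

/-- Block-diagonal restriction of a matrix along the partition determined by a labelling `bin`. -/
def bdiag {d : ℕ} {D : Finset (Pt d)} (bin : Pt d → ℕ) (A : Matrix D D ℝ) :
    Matrix D D ℝ :=
  Matrix.of fun s t => if bin (s : Pt d) = bin (t : Pt d) then A s t else 0

/-- `L_{n,m}(ρ) = ρ^{2ν} K_{n,m}(ρ)`. -/
def Lmat {d : ℕ} (ν : ℝ) (N : ℕ) (D : Finset (Pt d))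
    (nb : Pt d → Finset (Pt d)) (a : Pt d → Pt d → ℝ) (ρ : ℝ) :
    Matrix D D ℝ :=
  ρ ^ (2 * ν) • Kmat ν N D nb a ρ

/-- `K^B_{n,m}(ρ)`: the block-diagonal approximation of `K_{n,m}(ρ)`. -/
def KmatB {d : ℕ} (ν : ℝ) (N : ℕ) (D : Finset (Pt d))
    (nb : Pt d → Finset (Pt d)) (a : Pt d → Pt d → ℝ) (bin : Pt d → ℕ) (ρ : ℝ) :
    Matrix D D ℝ := bdiag bin (Kmat ν N D nb a ρ)

/-- `L^B_{n,m}(ρ) = ρ^{2ν} K^B_{n,m}(ρ)`. -/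
def LmatB {d : ℕ} (ν : ℝ) (N : ℕ) (D : Finset (Pt d))
    (nb : Pt d → Finset (Pt d)) (a : Pt d → Pt d → ℝ) (bin : Pt d → ℕ) (ρ : ℝ) :
    Matrix D D ℝ := bdiag bin (Lmat ν N D nb a ρ)

/-- Euclidean norm of a finite-dimensional real vector. -/
def eNorm {ι : Type*} [Fintype ι] (v : ι → ℝ) : ℝ := Real.sqrt (∑ i, (v i) ^ 2)

/-- Frobenius norm of a real matrix. -/
def frobNorm {ι : Type*} [Fintype ι] (A : Matrix ι ι ℝ) : ℝ :=
  Real.sqrt (∑ i, ∑ j, (A i j) ^ 2)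

/-- The `ℓ² → ℓ²` operator (spectral) norm of a real matrix. -/
def opNorm {ι : Type*} [Fintype ι] (A : Matrix ι ι ℝ) : ℝ :=
  sSup {c : ℝ | ∃ v : ι → ℝ, eNorm v ≤ 1 ∧ c = eNorm (A.mulVec v)}

/-- The nuclear norm (sum of singular values): trace of the psd square root of `Aᵀ A`. -/
def nucNorm {ι : Type*} [Fintype ι] [DecidableEq ι] (A : Matrix ι ι ℝ) : ℝ :=
  (let hA := Matrix.posSemidef_conjTranspose_mul_self A
   (hA.1.eigenvectorUnitary : Matrix ι ι ℝ) * Matrix.diagonal (Real.sqrt ∘ hA.1.eigenvalues) *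
     (star hA.1.eigenvectorUnitary : Matrix ι ι ℝ)).trace

/-- The standard Gaussian product measure on `ι → ℝ`. -/
def stdGaussianPi (ι : Type*) [Fintype ι] : Measure (ι → ℝ) :=
  Measure.pi fun _ => gaussianReal 0 1

end

/-!
Write `w(y) = (1 + y)^{-(d+ζ)}` and `m = N‖t - s‖`. For every `u`, the point of `{s, t}` farther
from `u` is at distance at least `‖t - s‖ / 2`, so its factor in `(A * A) s t` is at most
`2^{d+ζ} w(m)`, and by monotonicity it is also at most the factor of the nearer point; the product
is therefore bounded by `cappedDecay` at the nearer distance. Quasi-uniformity puts the `k`-th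
nearest neighbour of any point at scaled distance at least `(Cmin/2) k^{1/d}`, so a sum over `D`
of an antitone function is dominated by its values at these radii. For `ζ > 0` this leaves a
convergent `p`-series times `w(m)`. For `ζ = 0` the `k`-th term is at most `min (a/k) (b/k²)`
with `a ≍ w(m)`, and the harmonic sum up to the crossover `k ≈ b/a ≍ (1 + m)^d` produces the
factor `log (1 + m)`.
-/

lemma le_two_mul_natFloor {x : ℝ} (hx : 1 ≤ x) : x ≤ 2 * ⌊x⌋₊ := by
  have h1 : (1 : ℝ) ≤ ⌊x⌋₊ := by exact_mod_cast Nat.one_le_floor_iff x |>.mpr hx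
  linarith [Nat.lt_floor_add_one x]

lemma rpow_one_div_le_two_mul_Nof {d n : ℕ} (hn : 1 ≤ n) :
    (n : ℝ) ^ ((1 : ℝ) / d) ≤ 2 * Nof d n :=
  le_two_mul_natFloor (Real.one_le_rpow (by exact_mod_cast hn) (by positivity))

lemma half_mul_rpow_le_Nof_mul {d n : ℕ} {Cmin k δ : ℝ} (hn : 1 ≤ n) (hCmin : 0 ≤ Cmin)
    (hk : 0 ≤ k) (h : Cmin * (k / n) ^ ((1 : ℝ) / d) ≤ δ) :
    Cmin / 2 * k ^ ((1 : ℝ) / d) ≤ Nof d n * δ := by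
  have hx : 0 < (n : ℝ) ^ ((1 : ℝ) / d) := by positivity
  rw [Real.div_rpow hk (by positivity)] at h
  calc Cmin / 2 * k ^ ((1 : ℝ) / d)
      = (n : ℝ) ^ ((1 : ℝ) / d) / 2 * (Cmin * (k ^ ((1 : ℝ) / d) / (n : ℝ) ^ ((1 : ℝ) / d))) := by
        field_simp
    _ ≤ Nof d n * δ := by
        gcongr ?_ * ?_
        linarith [rpow_one_div_le_two_mul_Nof (d := d) hn]

lemma antitoneOn_one_add_rpow_neg {e : ℝ} (he : 0 ≤ e) :
    AntitoneOn (fun y : ℝ => (1 + y) ^ (-e)) (Set.Ici 0) := fun x hx _ _ hxy =>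
  Real.rpow_le_rpow_of_nonpos (by linarith [Set.mem_Ici.mp hx]) (by linarith) (by linarith)

lemma one_add_rpow_neg_le_two_rpow_mul {e m y : ℝ} (he : 0 ≤ e) (hm : 0 ≤ m)
    (hmy : m ≤ 2 * y) : (1 + y) ^ (-e) ≤ 2 ^ e * (1 + m) ^ (-e) := by
  have hy : 0 ≤ y := by linarith
  calc (1 + y) ^ (-e) = 2 ^ e * (2 * (1 + y)) ^ (-e) := by
        rw [Real.mul_rpow zero_le_two (by linarith), ← mul_assoc, ← Real.rpow_add two_pos,
          add_neg_cancel, Real.rpow_zero, one_mul]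
    _ ≤ 2 ^ e * (1 + m) ^ (-e) := mul_le_mul_of_nonneg_left
        (Real.rpow_le_rpow_of_nonpos (by linarith) (by linarith) (by linarith)) (by positivity)

lemma one_add_mul_rpow_rpow_neg_le {c k e : ℝ} (d : ℝ) (hc : 0 < c) (hk : 0 < k) (he : 0 ≤ e) :
    (1 + c * k ^ (1 / d)) ^ (-e) ≤ c ^ (-e) * (k ^ (e / d))⁻¹ := by
  have hy : 0 < c * k ^ (1 / d) := by positivity
  calc (1 + c * k ^ (1 / d)) ^ (-e) ≤ (c * k ^ (1 / d)) ^ (-e) :=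
        Real.rpow_le_rpow_of_nonpos hy (by linarith) (by linarith)
    _ = c ^ (-e) * (k ^ (e / d))⁻¹ := by
        rw [Real.mul_rpow hc.le (by positivity), ← Real.rpow_mul hk.le, ← Real.rpow_neg hk.le]
        ring_nf

noncomputable def cappedDecay (e A y : ℝ) : ℝ := (1 + y) ^ (-e) * min A ((1 + y) ^ (-e))

lemma cappedDecay_nonneg {e A y : ℝ} (hA : 0 ≤ A) (hy : 0 ≤ y) : 0 ≤ cappedDecay e A y := by
  unfold cappedDecay; positivity

lemma cappedDecay_le_mul {e A y : ℝ} (hy : 0 ≤ y) : cappedDecay e A y ≤ A * (1 + y) ^ (-e) := by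
  rw [cappedDecay, mul_comm]
  gcongr
  exact min_le_left _ _

lemma cappedDecay_le_sq {e A y : ℝ} (hy : 0 ≤ y) : cappedDecay e A y ≤ ((1 + y) ^ (-e)) ^ 2 := by
  rw [cappedDecay, sq]
  gcongr
  exact min_le_right _ _

lemma antitoneOn_cappedDecay {e A : ℝ} (he : 0 ≤ e) (hA : 0 ≤ A) :
    AntitoneOn (cappedDecay e A) (Set.Ici 0) := fun x hx y hy hxy => by
  have h := antitoneOn_one_add_rpow_neg he hx hy hxy
  have hx' : 0 ≤ x := hx
  have hy' : 0 ≤ y := hy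
  exact mul_le_mul h (min_le_min_left A h) (le_min hA (by positivity)) (by positivity)

lemma rpow_neg_mul_rpow_neg_le_cappedDecay_add {e m y z : ℝ} (he : 0 ≤ e) (hm : 0 ≤ m)
    (hy : 0 ≤ y) (hz : 0 ≤ z) (hmyz : m ≤ y + z) :
    (1 + y) ^ (-e) * (1 + z) ^ (-e) ≤
      cappedDecay e (2 ^ e * (1 + m) ^ (-e)) y + cappedDecay e (2 ^ e * (1 + m) ^ (-e)) z := by
  wlog hzy : z ≤ y generalizing y z
  · rw [mul_comm, add_comm (cappedDecay _ _ y)]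
    exact this hz hy (by linarith) (by linarith)
  have hA : (1 + y) ^ (-e) ≤ 2 ^ e * (1 + m) ^ (-e) :=
    one_add_rpow_neg_le_two_rpow_mul he hm (by linarith)
  have hzy' : (1 + y) ^ (-e) ≤ (1 + z) ^ (-e) := antitoneOn_one_add_rpow_neg he hz hy hzy
  calc (1 + y) ^ (-e) * (1 + z) ^ (-e) ≤ cappedDecay e (2 ^ e * (1 + m) ^ (-e)) z := by
        rw [mul_comm, cappedDecay]
        gcongr
        exact le_min hA hzy'
    _ ≤ _ := le_add_of_nonneg_left (cappedDecay_nonneg (by positivity) hy)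

lemma sum_range_inv_sq_le (K M : ℕ) :
    ∑ k ∈ Finset.range M, (((K : ℝ) + k + 1) ^ 2)⁻¹ ≤ 2 / ((K : ℝ) + 1) := by
  have h := Finset.sum_Ico_add (fun i : ℕ => ((i : ℝ) ^ 2)⁻¹) 0 M (K + 1)
  rw [zero_add, Finset.Ico_add_one_left_eq_Ioo, ← Finset.range_eq_Ico] at h
  calc ∑ k ∈ Finset.range M, (((K : ℝ) + k + 1) ^ 2)⁻¹
      = ∑ x ∈ Finset.Ioo K (M + (K + 1)), ((x : ℝ) ^ 2)⁻¹ := by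
        rw [← h]; push_cast; ring_nf
    _ ≤ 2 / (K + 1) := sum_Ioo_inv_sq_le K _

lemma sum_range_le_of_le_div_of_le_div_sq {f : ℕ → ℝ} {a b : ℝ} (ha : 0 < a) (hb : 0 ≤ b)
    (hfa : ∀ k : ℕ, f k ≤ a / (k + 1)) (hfb : ∀ k : ℕ, f k ≤ b / ((k : ℝ) + 1) ^ 2) (M : ℕ) :
    ∑ k ∈ Finset.range M, f k ≤ a * (3 + Real.log (1 + b / a)) := by
  -- below `K` the harmonic bound is used, above it the square-summable one
  set K := ⌈b / a⌉₊
  have hbK : b ≤ a * K := by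
    have := Nat.le_ceil (b / a)
    rwa [div_le_iff₀ ha, mul_comm] at this
  have hlogK : Real.log K ≤ Real.log (1 + b / a) := by
    rcases Nat.eq_zero_or_pos K with hK | hK
    · rw [hK, Nat.cast_zero, Real.log_zero]
      exact Real.log_nonneg (by linarith [div_nonneg hb ha.le])
    · have := Nat.ceil_lt_add_one (div_nonneg hb ha.le)
      exact Real.log_le_log (by exact_mod_cast hK) (by linarith)
  have hharmonic : ∑ k ∈ Finset.range K, a / ((k : ℝ) + 1) ≤ a * (1 + Real.log K) := by
    have h := harmonic_le_one_add_log K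
    rw [harmonic, Rat.cast_sum] at h
    simp_rw [div_eq_mul_inv, ← Finset.mul_sum]
    gcongr
    push_cast at h
    exact h
  have htail : ∑ k ∈ Finset.range M, b / (((K + k : ℕ) : ℝ) + 1) ^ 2 ≤ 2 * a := by
    simp_rw [div_eq_mul_inv, ← Finset.mul_sum]
    push_cast
    calc b * ∑ k ∈ Finset.range M, (((K : ℝ) + k + 1) ^ 2)⁻¹ ≤ b * (2 / (K + 1)) := by
          gcongr; exact sum_range_inv_sq_le K M
      _ ≤ 2 * a := by
          rw [mul_div_assoc', div_le_iff₀ (by positivity)]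
          nlinarith
  calc ∑ k ∈ Finset.range M, f k
      ≤ ∑ k ∈ Finset.range (K + M), if k < K then a / (k + 1) else b / ((k : ℝ) + 1) ^ 2 := by
        refine (Finset.sum_le_sum fun k _ => ?_).trans
          (Finset.sum_le_sum_of_subset_of_nonneg (Finset.range_subset_range.mpr (by omega))
            fun k _ _ => by split_ifs <;> positivity)
        split_ifs
        exacts [hfa k, hfb k]
    _ = ∑ k ∈ Finset.range K, a / ((k : ℝ) + 1) +
          ∑ k ∈ Finset.range M, b / (((K + k : ℕ) : ℝ) + 1) ^ 2 := by
        rw [Finset.sum_range_add]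
        congr 1
        · exact Finset.sum_congr rfl fun k hk => if_pos (Finset.mem_range.mp hk)
        · exact Finset.sum_congr rfl fun k _ => if_neg (by omega)
    _ ≤ a * (1 + Real.log K) + 2 * a := add_le_add hharmonic htail
    _ ≤ a * (3 + Real.log (1 + b / a)) := by nlinarith

lemma sum_decay_mul_decay_le_sum_cappedDecay {E : Type*} [SeminormedAddCommGroup E]
    (D : Finset E) {N e : ℝ} (hN : 0 ≤ N) (he : 0 ≤ e) (s t : E) :
    ∑ u ∈ D, (1 + N * ‖u - s‖) ^ (-e) * (1 + N * ‖t - u‖) ^ (-e) ≤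
      ∑ u ∈ D, cappedDecay e (2 ^ e * (1 + N * ‖t - s‖) ^ (-e)) (N * ‖u - s‖) +
        ∑ u ∈ D, cappedDecay e (2 ^ e * (1 + N * ‖t - s‖) ^ (-e)) (N * ‖u - t‖) := by
  rw [← Finset.sum_add_distrib]
  gcongr with u
  rw [norm_sub_rev t u]
  refine rpow_neg_mul_rpow_neg_le_cappedDecay_add he (by positivity) (by positivity)
    (by positivity) ?_
  rw [← mul_add]
  gcongr
  simpa only [norm_sub_rev t u, add_comm] using norm_sub_le_norm_sub_add_norm_sub t u s

lemma log_one_add_mul_rpow_le {X m : ℝ} (d : ℝ) (hX : 0 ≤ X) (hm : 0 ≤ m) (hd : 0 ≤ d) :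
    Real.log (1 + X * (1 + m) ^ d) ≤ Real.log (1 + X) + d * Real.log (1 + m) := by
  have hY : 1 ≤ (1 + m) ^ d := Real.one_le_rpow (by linarith) hd
  rw [← Real.log_rpow (by linarith), ← Real.log_mul (by positivity) (by positivity)]
  exact Real.log_le_log (by positivity) (by nlinarith)

section QuasiUniform

variable {d n : ℕ} {Cmin Cmax : ℝ} {D : Finset (Pt d)}

lemma QuasiUniform.sum_le_of_antitoneOn (hQ : QuasiUniform d n Cmin Cmax D) (hCmin : 0 ≤ Cmin)
    {p : Pt d} (hp : p ∈ D) {φ : ℝ → ℝ} (hφ : AntitoneOn φ (Set.Ici 0)) :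
    ∑ u ∈ D, φ (Nof d n * ‖u - p‖) ≤
      φ 0 + ∑ k ∈ Finset.range (n - 1), φ (Cmin / 2 * ((k : ℝ) + 1) ^ ((1 : ℝ) / d)) := by
  obtain ⟨hcard, hQ⟩ := hQ
  obtain ⟨g, hgD, hg_inj, hg_surj, -, hg_dist⟩ := hQ p hp
  have hn : 1 ≤ n := hcard ▸ Finset.card_pos.mpr ⟨p, hp⟩
  have herase : ∑ u ∈ D.erase p, φ (Nof d n * ‖u - p‖) = ∑ i, φ (Nof d n * ‖g i - p‖) :=
    (Finset.sum_bij (fun i _ => g i) (fun i _ => hgD i) (fun i _ j _ h => hg_inj h)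
      (fun u hu => let ⟨i, hi⟩ := hg_surj u hu; ⟨i, Finset.mem_univ i, hi⟩)
      (fun _ _ => rfl)).symm
  rw [← Finset.add_sum_erase D _ hp, herase, sub_self, norm_zero, mul_zero,
    ← Fin.sum_univ_eq_sum_range]
  gcongr with i
  refine hφ (Set.mem_Ici.mpr (mul_nonneg (by linarith) (by positivity)))
    (Set.mem_Ici.mpr (by positivity)) ?_
  rw [← dist_eq_norm, dist_comm]
  exact_mod_cast half_mul_rpow_le_Nof_mul hn hCmin (by positivity) (hg_dist i).1

lemma QuasiUniform.sum_cappedDecay_le_of_pos (hQ : QuasiUniform d n Cmin Cmax D) (hd : 1 ≤ d)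
    (hCmin : 0 < Cmin) {ζ A : ℝ} (hζ : 0 < ζ) (hA : 0 ≤ A) {p : Pt d} (hp : p ∈ D) :
    ∑ u ∈ D, cappedDecay (d + ζ) A (Nof d n * ‖u - p‖) ≤
      A * (1 + (Cmin / 2) ^ (-((d : ℝ) + ζ)) *
        ∑' k : ℕ, (((k : ℝ) + 1) ^ (((d : ℝ) + ζ) / d))⁻¹) := by
  have he : 0 ≤ (d : ℝ) + ζ := by positivity
  have hsummable : Summable fun k : ℕ => (((k : ℝ) + 1) ^ (((d : ℝ) + ζ) / d))⁻¹ := by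
    have hp : 1 < ((d : ℝ) + ζ) / d := by
      rw [one_lt_div (by positivity)]; linarith
    exact_mod_cast (summable_nat_add_iff 1).mpr (Real.summable_nat_rpow_inv.mpr hp)
  calc ∑ u ∈ D, cappedDecay (d + ζ) A (Nof d n * ‖u - p‖)
      ≤ cappedDecay (d + ζ) A 0 + ∑ k ∈ Finset.range (n - 1),
          cappedDecay (d + ζ) A (Cmin / 2 * ((k : ℝ) + 1) ^ ((1 : ℝ) / d)) :=
        hQ.sum_le_of_antitoneOn hCmin.le hp (antitoneOn_cappedDecay he hA)
    _ ≤ A + ∑ k ∈ Finset.range (n - 1),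
          A * ((Cmin / 2) ^ (-((d : ℝ) + ζ)) * (((k : ℝ) + 1) ^ (((d : ℝ) + ζ) / d))⁻¹) := by
        gcongr with k
        · simpa using cappedDecay_le_mul (e := (d : ℝ) + ζ) (A := A) le_rfl
        · refine (cappedDecay_le_mul (by positivity)).trans ?_
          gcongr
          exact one_add_mul_rpow_rpow_neg_le _ (by positivity) (by positivity) he
    _ ≤ _ := by
        rw [← Finset.mul_sum, ← Finset.mul_sum, ← mul_one_add]
        gcongr
        exact hsummable.sum_le_tsum _ fun k _ => by positivity

lemma QuasiUniform.sum_cappedDecay_le_of_eq_zero (hQ : QuasiUniform d n Cmin Cmax D)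
    (hd : 1 ≤ d) (hCmin : 0 < Cmin) {A : ℝ} (hA : 0 < A) {p : Pt d} (hp : p ∈ D) :
    ∑ u ∈ D, cappedDecay d A (Nof d n * ‖u - p‖) ≤
      A * (1 + (Cmin / 2) ^ (-(d : ℝ)) *
        (3 + Real.log (1 + (Cmin / 2) ^ (-(d : ℝ)) / A))) := by
  set B := (Cmin / 2) ^ (-(d : ℝ))
  have hB : 0 < B := by positivity
  have hdecay : ∀ k : ℕ, (1 + Cmin / 2 * ((k : ℝ) + 1) ^ ((1 : ℝ) / d)) ^ (-(d : ℝ)) ≤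
      B / (k + 1) := fun k => by
    have h := one_add_mul_rpow_rpow_neg_le (d : ℝ) (half_pos hCmin) (k.cast_add_one_pos (α := ℝ))
      (Nat.cast_nonneg d)
    rwa [div_self (by positivity), Real.rpow_one, ← div_eq_mul_inv] at h
  have hsum := sum_range_le_of_le_div_of_le_div_sq (f := fun k : ℕ =>
      cappedDecay d A (Cmin / 2 * ((k : ℝ) + 1) ^ ((1 : ℝ) / d))) (a := A * B) (b := B ^ 2)
    (by positivity) (by positivity)
    (fun k => by
      refine (cappedDecay_le_mul (by positivity)).trans ?_
      rw [mul_div_assoc]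
      gcongr
      exact hdecay k)
    (fun k => by
      refine (cappedDecay_le_sq (by positivity)).trans ?_
      rw [← div_pow]
      gcongr
      exact hdecay k) (n - 1)
  calc ∑ u ∈ D, cappedDecay d A (Nof d n * ‖u - p‖)
      ≤ cappedDecay d A 0 + ∑ k ∈ Finset.range (n - 1),
          cappedDecay d A (Cmin / 2 * ((k : ℝ) + 1) ^ ((1 : ℝ) / d)) :=
        hQ.sum_le_of_antitoneOn hCmin.le hp (antitoneOn_cappedDecay (by positivity) hA.le)
    _ ≤ A + A * B * (3 + Real.log (1 + B ^ 2 / (A * B))) := by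
        gcongr
        simpa using cappedDecay_le_mul (e := (d : ℝ)) (A := A) le_rfl
    _ = _ := by
        rw [sq, mul_div_mul_right _ _ hB.ne']
        ring

end QuasiUniform

theorem QuasiUniform.exists_sum_decay_mul_decay_le {d : ℕ} {Cmin Cmax ζ : ℝ} (hd : 1 ≤ d)
    (hCmin : 0 < Cmin) (hζ : 0 ≤ ζ) :
    ∃ K : ℝ, 0 < K ∧ ∀ (n : ℕ) (D : Finset (Pt d)), QuasiUniform d n Cmin Cmax D →
      ∀ s ∈ D, ∀ t ∈ D,
        ∑ u ∈ D, (1 + Nof d n * ‖u - s‖) ^ (-((d : ℝ) + ζ)) *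
            (1 + Nof d n * ‖t - u‖) ^ (-((d : ℝ) + ζ)) ≤
          K * (1 + Nof d n * ‖t - s‖) ^ (-((d : ℝ) + ζ)) *
            (1 + if ζ = 0 then Real.log (1 + Nof d n * ‖t - s‖) else 0) := by
  rcases hζ.eq_or_lt with rfl | hζ
  · set B := (Cmin / 2) ^ (-(d : ℝ))
    set L₀ := Real.log (1 + B / 2 ^ (d : ℝ))
    have hL₀ : 0 ≤ L₀ := Real.log_nonneg (by linarith [show 0 ≤ B / 2 ^ (d : ℝ) by positivity])
    refine ⟨2 * 2 ^ (d : ℝ) * (1 + B * (3 + L₀ + d)), by positivity,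
      fun n D hQ s hs t ht => ?_⟩
    simp only [add_zero, if_true]
    set m := (Nof d n : ℝ) * ‖t - s‖
    set A := 2 ^ (d : ℝ) * (1 + m) ^ (-(d : ℝ))
    have hm : 0 ≤ m := by positivity
    have hL : 0 ≤ Real.log (1 + m) := Real.log_nonneg (by linarith)
    have hlog : Real.log (1 + B / A) ≤ L₀ + d * Real.log (1 + m) := by
      have hBA : B / A = B / 2 ^ (d : ℝ) * (1 + m) ^ (d : ℝ) := by
        simp only [A]
        rw [Real.rpow_neg (by linarith)]
        field_simp
      rw [hBA]
      exact log_one_add_mul_rpow_le _ (by positivity) hm (by positivity)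
    calc _ ≤ ∑ u ∈ D, cappedDecay d A (Nof d n * ‖u - s‖) +
          ∑ u ∈ D, cappedDecay d A (Nof d n * ‖u - t‖) :=
          sum_decay_mul_decay_le_sum_cappedDecay D (by positivity) (by positivity) s t
      _ ≤ 2 * (A * (1 + B * (3 + Real.log (1 + B / A)))) := by
          rw [two_mul]
          exact add_le_add (hQ.sum_cappedDecay_le_of_eq_zero hd hCmin (by positivity) hs)
            (hQ.sum_cappedDecay_le_of_eq_zero hd hCmin (by positivity) ht)
      _ ≤ 2 * (A * (1 + B * (3 + L₀ + d * Real.log (1 + m)))) := by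
          gcongr 2 * (A * (1 + B * ?_))
          linarith
      _ ≤ 2 * (A * ((1 + B * (3 + L₀ + d)) * (1 + Real.log (1 + m)))) := by
          gcongr
          have : 0 ≤ B * (3 + L₀) * Real.log (1 + m) + B * d := by positivity
          linarith
      _ = _ := by ring
  · set S := ∑' k : ℕ, (((k : ℝ) + 1) ^ (((d : ℝ) + ζ) / d))⁻¹
    have hS : 0 ≤ S := tsum_nonneg fun k => by positivity
    refine ⟨2 * 2 ^ ((d : ℝ) + ζ) * (1 + (Cmin / 2) ^ (-((d : ℝ) + ζ)) * S), by positivity,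
      fun n D hQ s hs t ht => ?_⟩
    rw [if_neg hζ.ne', add_zero, mul_one]
    set A := 2 ^ ((d : ℝ) + ζ) * (1 + Nof d n * ‖t - s‖) ^ (-((d : ℝ) + ζ))
    calc _ ≤ ∑ u ∈ D, cappedDecay (d + ζ) A (Nof d n * ‖u - s‖) +
          ∑ u ∈ D, cappedDecay (d + ζ) A (Nof d n * ‖u - t‖) :=
          sum_decay_mul_decay_le_sum_cappedDecay D (by positivity) (by positivity) s t
      _ ≤ 2 * (A * (1 + (Cmin / 2) ^ (-((d : ℝ) + ζ)) * S)) := by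
          rw [two_mul]
          exact add_le_add (hQ.sum_cappedDecay_le_of_pos hd hCmin hζ (by positivity) hs)
            (hQ.sum_cappedDecay_le_of_pos hd hCmin hζ (by positivity) ht)
      _ = _ := by ring

theorem stmt12_general (d : ℕ) (Cmin Cmax C ζ : ℝ)
    (hd : 1 ≤ d) (hCmin : 0 < Cmin) (hC : 0 < C) (hζ : 0 ≤ ζ) :
    ∃ C'' : ℝ, 0 < C'' ∧
      ∀ (n : ℕ) (D : Finset (Pt d)), QuasiUniform d n Cmin Cmax D →
        ∀ A : Matrix D D ℝ,
          (∀ s t : D,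
            |A s t| ≤ C * (1 + (Nof d n : ℝ) * ‖(t : Pt d) - (s : Pt d)‖) ^ (-((d : ℝ) + ζ))) →
          ∀ s t : D,
            |(A * A) s t| ≤
              C'' * (1 + (Nof d n : ℝ) * ‖(t : Pt d) - (s : Pt d)‖) ^ (-((d : ℝ) + ζ)) *
                (1 + if ζ = 0 then
                      Real.log (1 + (Nof d n : ℝ) * ‖(t : Pt d) - (s : Pt d)‖) else 0) := by
  obtain ⟨K, hK, hsum⟩ := QuasiUniform.exists_sum_decay_mul_decay_le (Cmax := Cmax) hd hCmin hζ
  refine ⟨C ^ 2 * K, by positivity, fun n D hQ A hA s t => ?_⟩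
  set e := (d : ℝ) + ζ
  calc |(A * A) s t| ≤ ∑ u : D, |A s u| * |A u t| := by
        simpa only [Matrix.mul_apply, abs_mul] using
          Finset.abs_sum_le_sum_abs (fun u => A s u * A u t) Finset.univ
    _ ≤ ∑ u : D, C * (1 + Nof d n * ‖(u : Pt d) - s‖) ^ (-e) *
          (C * (1 + Nof d n * ‖(t : Pt d) - u‖) ^ (-e)) := by
        gcongr with u
        exacts [hA s u, hA u t]
    _ = C ^ 2 * ∑ u ∈ D, (1 + Nof d n * ‖u - (s : Pt d)‖) ^ (-e) *
          (1 + Nof d n * ‖(t : Pt d) - u‖) ^ (-e) := by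
        rw [Finset.mul_sum, ← Finset.sum_coe_sort D]
        exact Finset.sum_congr rfl fun u _ => by ring
    _ ≤ C ^ 2 * (K * (1 + Nof d n * ‖(t : Pt d) - s‖) ^ (-e) *
          (1 + if ζ = 0 then Real.log (1 + Nof d n * ‖(t : Pt d) - s‖) else 0)) := by
        gcongr
        exact hsum n D hQ s s.2 t t.2
    _ = _ := by ring

/-- **Lemma C.1.**  If the entries of `A` decay polynomially off the diagonal,
`|A_{s,t}| ≤ C (1 + N‖t-s‖)^{-(d+ζ)}`, on a quasi-uniform set `Dₙ`, then the entries of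
`B = A²` satisfy `|B_{s,t}| ≤ C'' (1 + N‖t-s‖)^{-(d+ζ)} (1 + [ζ = 0] log(1 + N‖t-s‖))` for a
bounded constant `C''` depending only on `C, d, ζ` and the quasi-uniformity constants. -/
theorem stmt12 (d : ℕ) (Cmin Cmax C ζ : ℝ)
    (hd : 1 ≤ d) (hCmin : 0 < Cmin) (hCC : Cmin ≤ Cmax) (hC : 0 < C) (hζ : 0 ≤ ζ) :
    ∃ C'' : ℝ, 0 < C'' ∧
      ∀ (n : ℕ) (D : Finset (Pt d)), QuasiUniform d n Cmin Cmax D →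
        ∀ A : Matrix D D ℝ,
          (∀ s t : D,
            |A s t| ≤ C * (1 + (Nof d n : ℝ) * ‖(t : Pt d) - (s : Pt d)‖) ^ (-((d : ℝ) + ζ))) →
          ∀ s t : D,
            |(A * A) s t| ≤
              C'' * (1 + (Nof d n : ℝ) * ‖(t : Pt d) - (s : Pt d)‖) ^ (-((d : ℝ) + ζ)) *
                (1 + if ζ = 0 then
                      Real.log (1 + (Nof d n : ℝ) * ‖(t : Pt d) - (s : Pt d)‖) else 0) :=
  stmt12_general d Cmin Cmax C ζ hd hCmin hC hζ
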